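/- arXiv:2603.00692 — 2 statements merged into one kernel-verified Lean document; each statement's English description precedes it below -/
import Mathlib

section
/- Let H be a graph containing a pendant path p - p¹ - … - pʳ of length r (each pⁱ has degree 2 except pʳ which has degree 1, and p¹,…,pʳ have no other neighbors). If S is an r-hop dominating set of H, then S contains p or pʳ. Moreover, if pʳ ∈ S then (S \ {pʳ}) ∪ {p} is also an r-hop dominating set of H of the same or smaller size. -/
/-- The exact-distance-`r` graph of `G`: same vertices, edges between pairs at
distance exactly `r` in `G`. -/
def exactDistGraph {V : Type*} (G : SimpleGraph V) (r : ℕ) : SimpleGraph V :=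
  SimpleGraph.fromRel (fun u v => G.dist u v = r)

/-- `S` is a dominating set of `H`. -/
def IsDomSet {V : Type*} (H : SimpleGraph V) (S : Set V) : Prop :=
  ∀ v ∉ S, ∃ s ∈ S, H.Adj v s

/-- `S` is a total dominating set of `H`. -/
def IsTotalDomSet {V : Type*} (H : SimpleGraph V) (S : Set V) : Prop :=
  ∀ v : V, ∃ s ∈ S, H.Adj v s

/-- `S` is an `r`-step dominating set of `G`: every vertex is at distance exactly `r`
from some vertex of `S`. -/
def IsRStepDomSet {V : Type*} (G : SimpleGraph V) (r : ℕ) (S : Set V) : Prop :=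
  ∀ v : V, ∃ s ∈ S, G.dist v s = r

/-- `S` is an `r`-hop dominating set of `G`: every vertex not in `S` is at distance
exactly `r` from some vertex of `S`. -/
def IsRHopDomSet {V : Type*} (G : SimpleGraph V) (r : ℕ) (S : Set V) : Prop :=
  ∀ v ∉ S, ∃ s ∈ S, G.dist v s = r

/-- `f` is a Roman dominating function on `H`. -/
def IsRDF {V : Type*} (H : SimpleGraph V) (f : V → ℕ) : Prop :=
  (∀ v, f v ≤ 2) ∧ ∀ v, f v = 0 → ∃ u, f u = 2 ∧ H.Adj u v

/-- `f` is an `r`-hop Roman dominating function on `G`. -/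
def IsRHRDF {V : Type*} (G : SimpleGraph V) (r : ℕ) (f : V → ℕ) : Prop :=
  (∀ v, f v ≤ 2) ∧ ∀ v, f v = 0 → ∃ u, f u = 2 ∧ G.dist u v = r

section aux
variable {W : Type*} (H : SimpleGraph W) (r : ℕ) (q : Fin (r+1) → W)

/-- Any walk of length `ℓ ≤ i` starting at `q i` stays on the path, ending at `q j`
with `i ≤ j + ℓ`. -/
lemma walkA
    (hadj : ∀ i j : Fin (r+1), H.Adj (q i) (q j) ↔ (i.val + 1 = j.val ∨ j.val + 1 = i.val))
    (hpend : ∀ i : Fin (r+1), 1 ≤ i.val → ∀ w : W, H.Adj (q i) w → ∃ j, w = q j) :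
    ∀ (ℓ : ℕ) (i : Fin (r+1)) (w : W) (p : H.Walk (q i) w), p.length = ℓ → ℓ ≤ i.val →
      ∃ j : Fin (r+1), w = q j ∧ i.val ≤ j.val + ℓ := by
  intro ℓ
  induction ℓ with
  | zero =>
    intro i w p hp _
    cases p with
    | nil => exact ⟨i, rfl, le_refl _⟩
    | cons h p' => simp at hp
  | succ n ih =>
    intro i w p hp hle
    cases p with
    | nil => simp at hp
    | cons h p' =>
      rename_i u
      obtain ⟨j', rfl⟩ := hpend i (by omega) u h
      rw [hadj] at h
      have hp' : p'.length = n := by simpa using hp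
      rcases h with hc | hc
      · obtain ⟨j, rfl, hj⟩ := ih j' w p' hp' (by omega)
        exact ⟨j, rfl, by omega⟩
      · obtain ⟨j, rfl, hj⟩ := ih j' w p' hp' (by omega)
        exact ⟨j, rfl, by omega⟩

/-- There is a walk of length `d` from `q a` to `q b` when `a + d = b`. -/
lemma walkB
    (hadj : ∀ i j : Fin (r+1), H.Adj (q i) (q j) ↔ (i.val + 1 = j.val ∨ j.val + 1 = i.val)) :
    ∀ (d : ℕ) (a b : Fin (r+1)), a.val + d = b.val →
      ∃ p : H.Walk (q a) (q b), p.length = d := by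
  intro d
  induction d with
  | zero =>
    intro a b hab
    have : a = b := Fin.ext (by omega)
    subst this
    exact ⟨SimpleGraph.Walk.nil, rfl⟩
  | succ n ih =>
    intro a b hab
    have hb : b.val < r + 1 := b.isLt
    have ha1 : a.val + 1 < r + 1 := by omega
    obtain ⟨p, hp⟩ := ih ⟨a.val + 1, ha1⟩ b (by simp; omega)
    have hadj' : H.Adj (q a) (q ⟨a.val + 1, ha1⟩) := (hadj a _).mpr (Or.inl rfl)
    exact ⟨SimpleGraph.Walk.cons hadj' p, by simp [hp]⟩

/-- A walk of length between 1 and r starting at the pendant end lands on the path,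
at index `j` with `r ≤ j + length`. -/
lemma keyC
    (hr : 2 ≤ r)
    (hadj : ∀ i j : Fin (r+1), H.Adj (q i) (q j) ↔ (i.val + 1 = j.val ∨ j.val + 1 = i.val))
    (hpend : ∀ i : Fin (r+1), 1 ≤ i.val → ∀ w : W, H.Adj (q i) w → ∃ j, w = q j) :
    ∀ (w : W) (p : H.Walk (q (Fin.last r)) w), 1 ≤ p.length → p.length ≤ r →
      ∃ j : Fin (r+1), w = q j ∧ r ≤ j.val + p.length := by
  intro w p h1 h2
  cases p with
  | nil => simp at h1
  | cons h p' =>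
    rename_i u
    rw [SimpleGraph.Walk.length_cons] at h2 ⊢
    have hlast : (Fin.last r).val = r := rfl
    obtain ⟨j', rfl⟩ := hpend (Fin.last r) (by omega) u h
    have hadj2 := (hadj _ _).mp h
    have hj' : j'.val + 1 = r := by
      rcases hadj2 with hc | hc
      · exact absurd hc (by have := j'.isLt; omega)
      · exact hc
    obtain ⟨j, rfl, hj⟩ :=
      walkA H r q hadj hpend p'.length j' w p' rfl (by omega)
    exact ⟨j, rfl, by omega⟩

/-- The only vertex at distance exactly `r` from `q (last r)` is `q 0`. -/
lemma keyLemma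
    (hr : 2 ≤ r)
    (hadj : ∀ i j : Fin (r+1), H.Adj (q i) (q j) ↔ (i.val + 1 = j.val ∨ j.val + 1 = i.val))
    (hpend : ∀ i : Fin (r+1), 1 ≤ i.val → ∀ w : W, H.Adj (q i) w → ∃ j, w = q j) :
    ∀ w : W, H.dist (q (Fin.last r)) w = r → w = q 0 := by
  intro w hd
  obtain ⟨p, hp⟩ := SimpleGraph.exists_walk_of_dist_ne_zero (by omega : H.dist (q (Fin.last r)) w ≠ 0)
  obtain ⟨j, rfl, hj⟩ := keyC H r q hr hadj hpend w p (by omega) (by omega)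
  -- dist (q j) (q last) ≤ r - j, but dist = r, so j = 0
  obtain ⟨p2, hp2⟩ := walkB H r q hadj (r - j.val) j (Fin.last r) (by have := j.isLt; simp; omega)
  have hle : H.dist (q (Fin.last r)) (q j) ≤ r - j.val := by
    rw [SimpleGraph.dist_comm]
    exact le_trans (SimpleGraph.dist_le p2) (le_of_eq hp2)
  have : j.val = 0 := by omega
  congr 1
  exact Fin.ext this

/-- `dist (q last) (q 0) = r`. -/
lemma distLast0
    (hr : 2 ≤ r) (hinj : Function.Injective q)
    (hadj : ∀ i j : Fin (r+1), H.Adj (q i) (q j) ↔ (i.val + 1 = j.val ∨ j.val + 1 = i.val))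
    (hpend : ∀ i : Fin (r+1), 1 ≤ i.val → ∀ w : W, H.Adj (q i) w → ∃ j, w = q j) :
    H.dist (q (Fin.last r)) (q 0) = r := by
  obtain ⟨p0, hp0⟩ := walkB H r q hadj r 0 (Fin.last r) (by simp)
  have hub : H.dist (q (Fin.last r)) (q 0) ≤ r := by
    rw [SimpleGraph.dist_comm]
    exact le_trans (SimpleGraph.dist_le p0) (le_of_eq hp0)
  have hne : H.dist (q (Fin.last r)) (q 0) ≠ 0 := by
    intro h0
    rcases SimpleGraph.dist_eq_zero_iff_eq_or_not_reachable.mp h0 with he | hnr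
    · have := hinj he
      have : (Fin.last r).val = (0 : Fin (r+1)).val := by rw [this]
      simp at this
      omega
    · exact hnr ⟨p0.reverse⟩
  obtain ⟨p, hp⟩ := SimpleGraph.exists_walk_of_dist_ne_zero hne
  obtain ⟨j, hj0, hj⟩ := keyC H r q hr hadj hpend (q 0) p (by omega) (by omega)
  have : j = 0 := (hinj hj0.symm)
  subst this
  simp at hj
  omega

end aux

theorem stmt_9 {W : Type*} (H : SimpleGraph W) (r : ℕ) (hr : 2 ≤ r)
    (q : Fin (r+1) → W) (hinj : Function.Injective q)
    (hadj : ∀ i j : Fin (r+1), H.Adj (q i) (q j) ↔ (i.val + 1 = j.val ∨ j.val + 1 = i.val))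
    (hpend : ∀ i : Fin (r+1), 1 ≤ i.val → ∀ w : W, H.Adj (q i) w → ∃ j, w = q j)
    (S : Set W) (hS : IsRHopDomSet H r S) :
    (q 0 ∈ S ∨ q (Fin.last r) ∈ S) ∧
    (q (Fin.last r) ∈ S →
      IsRHopDomSet H r ((S \ {q (Fin.last r)}) ∪ {q 0}) ∧
      ((S \ {q (Fin.last r)}) ∪ {q 0}).ncard ≤ S.ncard) := by
  have hkey : ∀ w : W, H.dist w (q (Fin.last r)) = r → w = q 0 := fun w hw =>
    keyLemma H r q hr hadj hpend w (by rwa [SimpleGraph.dist_comm])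
  constructor
  · by_cases hqr : q (Fin.last r) ∈ S
    · exact Or.inr hqr
    · obtain ⟨s, hsS, hds⟩ := hS _ hqr
      left
      have hs0 : s = q 0 := keyLemma H r q hr hadj hpend s hds
      rwa [← hs0]
  · intro hqr
    constructor
    · intro v hv
      by_cases hvlast : v = q (Fin.last r)
      · subst hvlast
        exact ⟨q 0, by simp, distLast0 H r q hr hinj hadj hpend⟩
      · have hvS : v ∉ S := by
          intro hvS
          exact hv (Or.inl ⟨hvS, hvlast⟩)
        obtain ⟨s, hsS, hds⟩ := hS v hvS
        by_cases hslast : s = q (Fin.last r)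
        · subst hslast
          have hv0 : v = q 0 := hkey v hds
          exact absurd (Or.inr (by simp [hv0])) hv
        · exact ⟨s, Or.inl ⟨hsS, hslast⟩, hds⟩
    · by_cases hfin : S.Finite
      · calc ((S \ {q (Fin.last r)}) ∪ {q 0}).ncard
            ≤ (S \ {q (Fin.last r)}).ncard + ({q 0} : Set W).ncard :=
              Set.ncard_union_le _ _
          _ = (S \ {q (Fin.last r)}).ncard + 1 := by rw [Set.ncard_singleton]
          _ = S.ncard := Set.ncard_diff_singleton_add_one hqr hfin
      · have hinf : S.Infinite := hfin
        have hinf' : ((S \ {q (Fin.last r)}) ∪ {q 0}).Infinite :=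
          (hinf.diff (Set.finite_singleton _)).mono Set.subset_union_left
        rw [hinf.ncard, hinf'.ncard]
end

section
/- Let H be a graph obtained from a graph G by attaching, at a distinguished vertex s, a pendant path s - s¹ - … - s^{r-1} and at s^{r-1} two pendant paths of length r each. If f is an r-hop Roman dominating function on H, then the total f-weight on the set consisting of s, the path vertices s¹,…,s^{r-1}, and the 2r vertices of the two pendant paths at s^{r-1} is at least 2, provided r ≥ 2. -/
/-!
Let `z` be the far end of one of the two length-`r` paths at `s^{r-1}`. Inside the attached
structure the distance to `z` is explicit, and since only `s` (at distance `2r - 1 > r` from `z`)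
has neighbours outside it, this explicit distance is a lower bound for `H.dist · z`. Hence
`s^{r-1}` is the only vertex at distance exactly `r` from `z`: either `f z ≥ 1`, or `f` puts `2`
on `s^{r-1}`. Applying this to both path ends gives weight at least `2`.
-/

open Function Set

namespace SimpleGraph

variable {V : Type*} {G : SimpleGraph V}

theorem Reachable.le_dist_add_of_adj_le (g : V → ℕ) (hg : ∀ u v, G.Adj u v → g u ≤ g v + 1)
    {u v : V} (h : G.Reachable u v) : g u ≤ G.dist u v + g v := by
  obtain ⟨p, hp⟩ := h.exists_walk_length_eq_dist
  rw [← hp]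
  clear hp h
  induction p with
  | nil => simp
  | cons hadj _ ih =>
    rw [Walk.length_cons]
    linarith [hg _ _ hadj]

theorem dist_le_of_adj_succ {n : ℕ} (a : Fin n → V)
    (ha : ∀ i j : Fin n, i.val + 1 = j.val → G.Adj (a i) (a j)) (i j : Fin n) (hij : i ≤ j) :
    G.dist (a i) (a j) ≤ j - i := by
  suffices ∀ k (j : Fin n), j.val = i.val + k → ∃ p : G.Walk (a i) (a j), p.length = k by
    obtain ⟨p, hp⟩ := this (j - i) j (by omega)
    exact hp ▸ dist_le p
  intro k
  induction k with
  | zero => exact fun j hj => ⟨Walk.nil.copy rfl (congrArg a (Fin.ext hj.symm)), by simp⟩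
  | succ k ih =>
    intro j hj
    obtain ⟨p, hp⟩ := ih ⟨i + k, by omega⟩ rfl
    exact ⟨p.concat (ha _ _ (by simp only [hj]; omega)), by simp [hp]⟩

end SimpleGraph

/-- `t i = sⁱ` (so `t 0 = s`), `a` and `b` are the two pendant paths at `s^{r-1}`, and `S` is the
whole attached structure; `mem_of_adj` says that only `s` has neighbours outside `S`. -/
structure IsForkedPendantPath {W : Type*} (H : SimpleGraph W) (r : ℕ) (t a b : Fin r → W)
    (S : Set W) : Prop where
  two_le : 2 ≤ r
  injective : Injective (Sum.elim t (Sum.elim a b) : Fin r ⊕ Fin r ⊕ Fin r → W)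
  eq_union : S = range t ∪ range a ∪ range b
  adj_iff : ∀ u v : W, u ∈ S → v ∈ S → (H.Adj u v ↔
      ((∃ i j : Fin r, u = t i ∧ v = t j ∧ (i.val + 1 = j.val ∨ j.val + 1 = i.val)) ∨
       (∃ i j : Fin r, u = a i ∧ v = a j ∧ (i.val + 1 = j.val ∨ j.val + 1 = i.val)) ∨
       (∃ i j : Fin r, u = b i ∧ v = b j ∧ (i.val + 1 = j.val ∨ j.val + 1 = i.val)) ∨
       (u = t ⟨r-1, by have := two_le; omega⟩ ∧ v = a ⟨0, by have := two_le; omega⟩) ∨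
       (u = a ⟨0, by have := two_le; omega⟩ ∧ v = t ⟨r-1, by have := two_le; omega⟩) ∨
       (u = t ⟨r-1, by have := two_le; omega⟩ ∧ v = b ⟨0, by have := two_le; omega⟩) ∨
       (u = b ⟨0, by have := two_le; omega⟩ ∧ v = t ⟨r-1, by have := two_le; omega⟩)))
  mem_of_adj : ∀ u ∈ S, u ≠ t ⟨0, by have := two_le; omega⟩ → ∀ w : W, H.Adj u w → w ∈ S

/-- The distance to `a (r - 1)` inside the attached structure; vertices outside it get `2r - 1`,
the value at `t 0 = s`. -/
noncomputable def branchEndPotential {W : Type*} (r : ℕ) (t a b : Fin r → W) : W → ℕ :=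
  extend (Sum.elim t (Sum.elim a b))
    (Sum.elim (fun j => 2 * r - 1 - j) (Sum.elim (fun i => r - 1 - i) (fun i => r + 1 + i)))
    (fun _ => 2 * r - 1)

namespace IsForkedPendantPath

variable {W : Type*} {H : SimpleGraph W} {r : ℕ} {t a b : Fin r → W} {S : Set W}

theorem swap (hH : IsForkedPendantPath H r t a b S) : IsForkedPendantPath H r t b a S where
  two_le := hH.two_le
  injective := by
    have h : Sum.elim t (Sum.elim b a) = Sum.elim t (Sum.elim a b) ∘ Sum.map id Sum.swap := by
      ext (j | i | i) <;> rfl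
    rw [h]
    exact hH.injective.comp (Sum.map_injective.mpr ⟨injective_id, Sum.swap_leftInverse.injective⟩)
  eq_union := hH.eq_union.trans (union_right_comm _ _ _)
  adj_iff u v hu hv := by
    have swap_or : ∀ A B C D E F G : Prop,
        (A ∨ B ∨ C ∨ D ∨ E ∨ F ∨ G) ↔ (A ∨ C ∨ B ∨ F ∨ G ∨ D ∨ E) := by
      tauto
    exact (hH.adj_iff u v hu hv).trans (swap_or _ _ _ _ _ _ _)
  mem_of_adj := hH.mem_of_adj

theorem t_mem (hH : IsForkedPendantPath H r t a b S) (j : Fin r) : t j ∈ S := by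
  rw [hH.eq_union]; exact .inl (.inl ⟨j, rfl⟩)

theorem a_mem (hH : IsForkedPendantPath H r t a b S) (i : Fin r) : a i ∈ S := by
  rw [hH.eq_union]; exact .inl (.inr ⟨i, rfl⟩)

theorem b_mem (hH : IsForkedPendantPath H r t a b S) (i : Fin r) : b i ∈ S := by
  rw [hH.eq_union]; exact .inr ⟨i, rfl⟩

theorem adj_a (hH : IsForkedPendantPath H r t a b S) (i j : Fin r) (hij : i.val + 1 = j.val) :
    H.Adj (a i) (a j) :=
  (hH.adj_iff _ _ (hH.a_mem i) (hH.a_mem j)).mpr (.inr (.inl ⟨i, j, rfl, rfl, .inl hij⟩))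

theorem branchEndPotential_t (hH : IsForkedPendantPath H r t a b S) (j : Fin r) :
    branchEndPotential r t a b (t j) = 2 * r - 1 - j :=
  hH.injective.extend_apply _ _ (.inl j)

theorem branchEndPotential_a (hH : IsForkedPendantPath H r t a b S) (i : Fin r) :
    branchEndPotential r t a b (a i) = r - 1 - i :=
  hH.injective.extend_apply _ _ (.inr (.inl i))

theorem branchEndPotential_b (hH : IsForkedPendantPath H r t a b S) (i : Fin r) :
    branchEndPotential r t a b (b i) = r + 1 + i :=
  hH.injective.extend_apply _ _ (.inr (.inr i))

theorem branchEndPotential_of_notMem (hH : IsForkedPendantPath H r t a b S) {u : W}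
    (hu : u ∉ S) : branchEndPotential r t a b u = 2 * r - 1 := by
  refine extend_apply' _ _ _ ?_
  rintro ⟨j | i | i, rfl⟩
  exacts [hu (hH.t_mem j), hu (hH.a_mem i), hu (hH.b_mem i)]

theorem branchEndPotential_le_add_one_of_adj (hH : IsForkedPendantPath H r t a b S) {u v : W}
    (huv : H.Adj u v) : branchEndPotential r t a b u ≤ branchEndPotential r t a b v + 1 := by
  have hr := hH.two_le
  have eq_t_zero {x y : W} (hx : x ∈ S) (hy : y ∉ S) (hxy : H.Adj x y) : x = t ⟨0, by omega⟩ :=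
    by_contra fun h => hy (hH.mem_of_adj x hx h y hxy)
  by_cases hu : u ∈ S <;> by_cases hv : v ∈ S
  · rcases (hH.adj_iff u v hu hv).mp huv with
      ⟨i, j, rfl, rfl, hij⟩ | ⟨i, j, rfl, rfl, hij⟩ | ⟨i, j, rfl, rfl, hij⟩ |
      ⟨rfl, rfl⟩ | ⟨rfl, rfl⟩ | ⟨rfl, rfl⟩ | ⟨rfl, rfl⟩ <;>
    simp only [hH.branchEndPotential_t, hH.branchEndPotential_a, hH.branchEndPotential_b] <;>
    omega
  · rw [eq_t_zero hu hv huv, hH.branchEndPotential_t, hH.branchEndPotential_of_notMem hv]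
    omega
  · rw [eq_t_zero hv hu huv.symm, hH.branchEndPotential_t, hH.branchEndPotential_of_notMem hu,
      Fin.val_mk]
    omega
  · rw [hH.branchEndPotential_of_notMem hu, hH.branchEndPotential_of_notMem hv]
    omega

theorem eq_of_dist_a_eq (hH : IsForkedPendantPath H r t a b S) {u : W}
    (hd : H.dist u (a ⟨r - 1, by have := hH.two_le; omega⟩) = r) :
    u = t ⟨r - 1, by have := hH.two_le; omega⟩ := by
  have hr := hH.two_le
  have hreach : H.Reachable u (a ⟨r - 1, by omega⟩) := .of_dist_ne_zero (by omega)
  have hpot := hreach.le_dist_add_of_adj_le _ fun _ _ => hH.branchEndPotential_le_add_one_of_adj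
  rw [hd, hH.branchEndPotential_a, Fin.val_mk] at hpot
  by_cases hu : u ∈ S
  · rw [hH.eq_union] at hu
    rcases hu with (⟨j, rfl⟩ | ⟨i, rfl⟩) | ⟨i, rfl⟩
    · rw [hH.branchEndPotential_t] at hpot
      exact congrArg t (Fin.ext (by simp only; omega))
    · have := SimpleGraph.dist_le_of_adj_succ a hH.adj_a i ⟨r - 1, by omega⟩
        (Fin.mk_le_mk.mpr (by omega))
      simp only at this
      omega
    · rw [hH.branchEndPotential_b] at hpot
      omega
  · rw [hH.branchEndPotential_of_notMem hu] at hpot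
    omega

end IsForkedPendantPath

theorem stmt_17 {W : Type*} (H : SimpleGraph W) (r : ℕ) (hr : 2 ≤ r)
    (t a b : Fin r → W)
    (hinj : Function.Injective
      (Sum.elim t (Sum.elim a b) : Fin r ⊕ Fin r ⊕ Fin r → W))
    (S : Set W) (hS : S = Set.range t ∪ Set.range a ∪ Set.range b)
    (hadj : ∀ u v : W, u ∈ S → v ∈ S → (H.Adj u v ↔
      ((∃ i j : Fin r, u = t i ∧ v = t j ∧ (i.val + 1 = j.val ∨ j.val + 1 = i.val)) ∨
       (∃ i j : Fin r, u = a i ∧ v = a j ∧ (i.val + 1 = j.val ∨ j.val + 1 = i.val)) ∨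
       (∃ i j : Fin r, u = b i ∧ v = b j ∧ (i.val + 1 = j.val ∨ j.val + 1 = i.val)) ∨
       (u = t ⟨r-1, by omega⟩ ∧ v = a ⟨0, by omega⟩) ∨
       (u = a ⟨0, by omega⟩ ∧ v = t ⟨r-1, by omega⟩) ∨
       (u = t ⟨r-1, by omega⟩ ∧ v = b ⟨0, by omega⟩) ∨
       (u = b ⟨0, by omega⟩ ∧ v = t ⟨r-1, by omega⟩))))
    (hpend : ∀ u ∈ S, u ≠ t ⟨0, by omega⟩ → ∀ w : W, H.Adj u w → w ∈ S)
    (f : W → ℕ) (hf : IsRHRDF H r f) :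
    2 ≤ (∑ i : Fin r, f (t i)) + (∑ i : Fin r, f (a i)) + (∑ i : Fin r, f (b i)) := by
  have hH : IsForkedPendantPath H r t a b S := ⟨hr, hinj, hS, hadj, hpend⟩
  obtain ⟨-, hdom⟩ := hf
  have le_sum (g : Fin r → W) (j : Fin r) : f (g j) ≤ ∑ i, f (g i) :=
    Finset.single_le_sum (f := fun i => f (g i)) (fun _ _ => Nat.zero_le _) (Finset.mem_univ j)
  have ht := le_sum t ⟨r - 1, by omega⟩
  have ha := le_sum a ⟨r - 1, by omega⟩
  have hb := le_sum b ⟨r - 1, by omega⟩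
  by_cases ha0 : f (a ⟨r - 1, by omega⟩) = 0
  · obtain ⟨u, hu2, hud⟩ := hdom _ ha0
    rw [hH.eq_of_dist_a_eq hud] at hu2
    omega
  by_cases hb0 : f (b ⟨r - 1, by omega⟩) = 0
  · obtain ⟨u, hu2, hud⟩ := hdom _ hb0
    rw [hH.swap.eq_of_dist_a_eq hud] at hu2
    omega
  omega
end
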